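/- arXiv:1604.01452 — 2 statements merged into one kernel-verified Lean document; each statement's English description precedes it below -/
import Mathlib

section
/- Let n be a positive integer, s > 0 and d > 0. Let S_n = {y ∈ ℝ^n : y_i ≥ 0 for all i, and y_1 + ⋯ + y_n ≤ s} be the full-dimensional simplex, and let U = {y ∈ S_n : max(y_1, …, y_n, s − (y_1 + ⋯ + y_n)) > d} be the disconnected region (the set of slack vectors having at least one slack exceeding d, where the (n+1)-st slack is s minus the sum of the others). Then the n-dimensional Lebesgue measure of U equals Σ_{k=1}^{n+1} (−1)^{k−1} · C(n+1, k) · (max(s − k·d, 0))^n / n!. -/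
/-!
The disconnected region is the union of the sets `A_j` where the `j`-th slack exceeds `d`, so by
inclusion–exclusion it suffices to know the volume of `A_T = ⋂_{j ∈ T} A_j`. Lowering each slack
in `T` by `d` is a translation of `ℝⁿ`, and it carries `A_T` onto the simplex
`{y ≥ 0, ∑ y ≤ s - |T| d}` up to boundary faces, which are null. A simplex `{y ≥ 0, ∑ y ≤ t}` has
volume `tⁿ / n!` by slicing off one coordinate, and grouping the subsets `T` by cardinality
produces the binomial coefficients.
-/

open MeasureTheory Finset

theorem Finset.sum_powerset_filter_nonempty_apply_card {α β : Type*} [AddCommMonoid α]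
    (f : ℕ → α) (x : Finset β) :
    ∑ t ∈ x.powerset with t.Nonempty, f #t = ∑ k ∈ Icc 1 #x, (#x).choose k • f k := by
  have hcard (t : Finset β) : (if t.Nonempty then f #t else 0) = if #t = 0 then 0 else f #t := by
    rcases t.eq_empty_or_nonempty with rfl | ht
    · simp
    · simp [ht, ht.card_pos.ne']
  rw [sum_filter, sum_congr rfl fun t _ => hcard t,
    sum_powerset_apply_card (fun m => if m = 0 then 0 else f m), sum_range_succ',
    ← Ico_add_one_right_eq_Icc, sum_Ico_eq_sum_range]
  simp [add_comm]

theorem integral_sub_pow_div_factorial (n : ℕ) (t : ℝ) :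
    ∫ x in (0 : ℝ)..t, (t - x) ^ n / n.factorial = t ^ (n + 1) / (n + 1).factorial := by
  rw [intervalIntegral.integral_div, intervalIntegral.integral_comp_sub_left (fun u => u ^ n),
    sub_self, sub_zero, integral_pow, Nat.factorial_succ]
  push_cast
  field_simp
  ring

theorem lintegral_Icc_sub_pow_div_factorial (n : ℕ) {t : ℝ} (ht : 0 ≤ t) :
    ∫⁻ x in Set.Icc 0 t, ENNReal.ofReal ((t - x) ^ n / n.factorial) =
      ENNReal.ofReal (t ^ (n + 1) / (n + 1).factorial) := by
  have hnonneg : 0 ≤ᵐ[volume.restrict (Set.Icc 0 t)] fun x => (t - x) ^ n / n.factorial :=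
    (ae_restrict_iff' measurableSet_Icc).2 <| .of_forall fun x hx => by
      have : 0 ≤ t - x := by linarith [hx.2]
      positivity
  rw [← ofReal_integral_eq_lintegral_ofReal (by fun_prop : Continuous _).integrableOn_Icc hnonneg,
    integral_Icc_eq_integral_Ioc, ← intervalIntegral.integral_of_le ht,
    integral_sub_pow_div_factorial]

section
variable {E : Type*} [NormedAddCommGroup E] [NormedSpace ℝ E] [MeasurableSpace E] [BorelSpace E]
  [FiniteDimensional ℝ E] (μ : Measure E) [μ.IsAddHaarMeasure]

theorem addHaar_setOf_linearMap_eq {f : E →ₗ[ℝ] ℝ} (hf : f ≠ 0) (c : ℝ) :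
    μ {x | f x = c} = 0 := by
  obtain ⟨p, rfl⟩ := LinearMap.surjective_of_ne_zero hf c
  have hker : LinearMap.ker f ≠ ⊤ := fun h => hf (LinearMap.ker_eq_top.1 h)
  have hlevel : {x | f x = f p} = (AffineSubspace.mk' p (LinearMap.ker f) : Set E) := by
    ext x
    simp [AffineSubspace.mem_mk', sub_eq_zero]
  rw [hlevel]
  refine Measure.addHaar_affineSubspace μ _ fun h => hker ?_
  rw [← AffineSubspace.direction_mk' p (LinearMap.ker f), h, AffineSubspace.direction_top]

end

section

variable {n : ℕ}

def slackVector (s : ℝ) (y : Fin n → ℝ) : Fin (n + 1) → ℝ :=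
  Fin.snoc y (s - ∑ i, y i)

@[simp]
theorem slackVector_castSucc (s : ℝ) (y : Fin n → ℝ) (i : Fin n) :
    slackVector s y i.castSucc = y i :=
  Fin.snoc_castSucc ..

@[simp]
theorem slackVector_last (s : ℝ) (y : Fin n → ℝ) :
    slackVector s y (Fin.last n) = s - ∑ i, y i :=
  Fin.snoc_last ..

theorem continuous_slackVector_apply (s : ℝ) (j : Fin (n + 1)) :
    Continuous fun y : Fin n → ℝ => slackVector s y j := by
  induction j using Fin.lastCases with
  | last => simp only [slackVector_last]; fun_prop
  | cast i => simpa using continuous_apply i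

theorem slackVector_add_init (s : ℝ) (y : Fin n → ℝ) (a : Fin (n + 1) → ℝ) :
    slackVector s (y + Fin.init a) = slackVector (s - ∑ j, a j) y + a := by
  ext j
  induction j using Fin.lastCases with
  | last =>
    simp only [slackVector_last, Pi.add_apply, sum_add_distrib, Fin.sum_univ_castSucc, Fin.init]
    ring
  | cast i => simp [Fin.init]

def closedSimplex (n : ℕ) (t : ℝ) : Set (Fin n → ℝ) := {y | ∀ j, 0 ≤ slackVector t y j}

def openSimplex (n : ℕ) (t : ℝ) : Set (Fin n → ℝ) := {y | ∀ j, 0 < slackVector t y j}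

theorem mem_closedSimplex_iff {t : ℝ} {y : Fin n → ℝ} :
    y ∈ closedSimplex n t ↔ (∀ i, 0 ≤ y i) ∧ ∑ i, y i ≤ t := by
  simp [closedSimplex, Fin.forall_fin_succ']

theorem openSimplex_subset_closedSimplex (t : ℝ) : openSimplex n t ⊆ closedSimplex n t :=
  fun _ hy j => (hy j).le

theorem closedSimplex_eq_empty {t : ℝ} (ht : t < 0) : closedSimplex n t = ∅ := by
  refine Set.eq_empty_of_forall_notMem fun y hy => ?_
  rw [mem_closedSimplex_iff] at hy
  linarith [sum_nonneg fun i (_ : i ∈ univ) => hy.1 i]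

theorem isClosed_closedSimplex (n : ℕ) (t : ℝ) : IsClosed (closedSimplex n t) := by
  rw [closedSimplex, Set.ofPred_forall]
  exact isClosed_iInter fun j => isClosed_le continuous_const (continuous_slackVector_apply t j)

theorem volume_closedSimplex (n : ℕ) {t : ℝ} (ht : 0 ≤ t) :
    volume (closedSimplex n t) = ENNReal.ofReal (t ^ n / n.factorial) := by
  induction n generalizing t with
  | zero =>
    have : closedSimplex 0 t = Set.univ := by
      ext y
      simp [mem_closedSimplex_iff, ht]
    rw [this, volume_pi, Measure.pi_univ]
    simp
  | succ n ih =>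
    let S : Set (ℝ × (Fin n → ℝ)) := {p | 0 ≤ p.1 ∧ p.2 ∈ closedSimplex n (t - p.1)}
    have hS : MeasurableSet S := by
      simp only [S, mem_closedSimplex_iff]
      measurability
    have hpre :
        MeasurableEquiv.piFinSuccAbove (fun _ => ℝ) 0 ⁻¹' S = closedSimplex (n + 1) t := by
      ext y
      simp only [S, Set.mem_preimage, mem_closedSimplex_iff, Fin.forall_fin_succ,
        Fin.sum_univ_succ]
      simp [MeasurableEquiv.piFinSuccAbove, Fin.tail, and_assoc, le_sub_iff_add_le']
    have hsection (x : ℝ) : volume (Prod.mk x ⁻¹' S) =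
        (Set.Icc 0 t).indicator (fun x => ENNReal.ofReal ((t - x) ^ n / n.factorial)) x := by
      by_cases hx : x ∈ Set.Icc 0 t
      · have : Prod.mk x ⁻¹' S = closedSimplex n (t - x) := Set.ext fun z => and_iff_right hx.1
        rw [Set.indicator_of_mem hx, this, ih (sub_nonneg.2 hx.2)]
      · have : Prod.mk x ⁻¹' S = ∅ := by
          rcases not_and_or.1 hx with hx | hx
          · exact Set.eq_empty_of_forall_notMem fun z hz => hx hz.1
          · have : closedSimplex n (t - x) = ∅ := closedSimplex_eq_empty (by linarith)
            exact Set.eq_empty_of_forall_notMem fun z hz => this.subset hz.2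
        rw [Set.indicator_of_notMem hx, this, measure_empty]
    rw [← hpre,
      (volume_preserving_piFinSuccAbove (fun _ => ℝ) 0).measure_preimage hS.nullMeasurableSet,
      Measure.volume_eq_prod, Measure.prod_apply hS, lintegral_congr hsection,
      lintegral_indicator measurableSet_Icc, lintegral_Icc_sub_pow_div_factorial n ht]

theorem volume_setOf_slackVector_eq_zero (hn : 0 < n) (t : ℝ) (j : Fin (n + 1)) :
    volume {y : Fin n → ℝ | slackVector t y j = 0} = 0 := by
  induction j using Fin.lastCases with
  | last =>
    have hsum : (∑ i, LinearMap.proj i : (Fin n → ℝ) →ₗ[ℝ] ℝ) ≠ 0 := fun h => by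
      simpa [hn.ne'] using LinearMap.congr_fun h 1
    simpa [sub_eq_zero, eq_comm] using addHaar_setOf_linearMap_eq volume hsum t
  | cast i =>
    have hproj : (LinearMap.proj i : (Fin n → ℝ) →ₗ[ℝ] ℝ) ≠ 0 := fun h => by
      simpa using LinearMap.congr_fun h 1
    simpa using addHaar_setOf_linearMap_eq volume hproj 0

theorem volume_openSimplex (hn : 0 < n) (t : ℝ) :
    volume (openSimplex n t) = volume (closedSimplex n t) := by
  refine measure_eq_measure_of_null_sdiff (openSimplex_subset_closedSimplex t) ?_
  refine measure_mono_null (fun y ⟨hclosed, hnotopen⟩ => ?_)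
    (measure_iUnion_null (volume_setOf_slackVector_eq_zero hn t))
  obtain ⟨j, hj⟩ := not_forall.1 hnotopen
  exact Set.mem_iUnion.2 ⟨j, le_antisymm (not_lt.1 hj) (hclosed j)⟩

theorem volume_eq_of_openSimplex_subset_of_subset_closedSimplex (hn : 0 < n) {t : ℝ}
    {X : Set (Fin n → ℝ)} (hopen : openSimplex n t ⊆ X) (hclosed : X ⊆ closedSimplex n t) :
    volume X = ENNReal.ofReal (max t 0 ^ n / n.factorial) := by
  have hX : volume X = volume (closedSimplex n t) :=
    le_antisymm (measure_mono hclosed) (volume_openSimplex hn t ▸ measure_mono hopen)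
  rcases le_or_gt 0 t with ht | ht
  · rw [hX, max_eq_left ht, volume_closedSimplex n ht]
  · rw [hX, max_eq_right ht.le, closedSimplex_eq_empty ht, zero_pow hn.ne']
    simp

def exceedSet (n : ℕ) (s d : ℝ) (T : Finset (Fin (n + 1))) : Set (Fin n → ℝ) :=
  {y | y ∈ closedSimplex n s ∧ ∀ j ∈ T, d < slackVector s y j}

theorem volume_exceedSet (hn : 0 < n) (s : ℝ) {d : ℝ} (hd : 0 ≤ d) (T : Finset (Fin (n + 1))) :
    volume (exceedSet n s d T) = ENNReal.ofReal (max (s - #T * d) 0 ^ n / n.factorial) := by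
  let a : Fin (n + 1) → ℝ := fun j => if j ∈ T then d else 0
  have hsum : ∑ j, a j = #T * d := by simp [a, sum_ite_mem]
  have hslack (z : Fin n → ℝ) (j : Fin (n + 1)) :
      slackVector s (z + Fin.init a) j = slackVector (s - #T * d) z j + a j := by
    rw [slackVector_add_init, hsum, Pi.add_apply]
  rw [← measure_preimage_add_right volume (Fin.init a)]
  refine volume_eq_of_openSimplex_subset_of_subset_closedSimplex hn (fun z hz => ?_) fun z hz => ?_
  · refine ⟨fun j => ?_, fun j hj => ?_⟩
    · rw [hslack]
      have : 0 ≤ a j := by positivity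
      linarith [hz j]
    · simp only [hslack, a, if_pos hj]
      linarith [hz j]
  · intro j
    by_cases hj : j ∈ T
    · have := hz.2 j hj
      simp only [hslack, a, if_pos hj] at this
      linarith
    · simpa [hslack, a, hj] using hz.1 j

theorem measurableSet_exceedSet (s d : ℝ) (T : Finset (Fin (n + 1))) :
    MeasurableSet (exceedSet n s d T) := by
  refine (isClosed_closedSimplex n s).measurableSet.inter <| measurableSet_setOfPred.2 ?_
  exact .forall fun j => .imp measurable_const <| measurableSet_setOfPred.1 <|
    measurableSet_lt measurable_const (continuous_slackVector_apply s j).measurable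

theorem biInter_exceedSet_singleton (s d : ℝ) {T : Finset (Fin (n + 1))} (hT : T.Nonempty) :
    ⋂ j ∈ T, exceedSet n s d {j} = exceedSet n s d T := by
  obtain ⟨j₀, hj₀⟩ := hT
  ext y
  simp only [Set.mem_iInter, exceedSet, Set.mem_ofPred_eq, mem_singleton, forall_eq]
  exact ⟨fun h => ⟨(h j₀ hj₀).1, fun j hj => (h j hj).2⟩, fun h j hj => ⟨h.1, h.2 j hj⟩⟩

end

theorem stmt2_general (n : ℕ) (hn : 0 < n) (s d : ℝ) (hd : 0 < d) :
    (volume {y : Fin n → ℝ |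
        ((∀ i, 0 ≤ y i) ∧ ∑ i, y i ≤ s) ∧
          ((∃ i, d < y i) ∨ d < s - ∑ i, y i)}).toReal
      = ∑ k ∈ Finset.Icc 1 (n + 1),
          (-1 : ℝ) ^ (k - 1) * (n + 1).choose k * (max (s - k * d) 0) ^ n / n.factorial := by
  have hU : {y : Fin n → ℝ | ((∀ i, 0 ≤ y i) ∧ ∑ i, y i ≤ s) ∧
      ((∃ i, d < y i) ∨ d < s - ∑ i, y i)} = ⋃ j ∈ univ, exceedSet n s d {j} := by
    ext y
    simp [exceedSet, mem_closedSimplex_iff, Fin.exists_fin_succ']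
  have hfinite (j : Fin (n + 1)) : volume (exceedSet n s d {j}) ≠ ⊤ :=
    ne_top_of_le_ne_top (volume_eq_of_openSimplex_subset_of_subset_closedSimplex hn
      (openSimplex_subset_closedSimplex s) subset_rfl ▸ ENNReal.ofReal_ne_top)
      (measure_mono fun y hy => hy.1)
  rw [hU, ← measureReal_def, measureReal_biUnion_eq_sum_powerset
    (fun j _ => measurableSet_exceedSet s d {j}) fun j _ => hfinite j]
  have hterm (u : Finset (Fin (n + 1))) (hu : u ∈ univ.powerset.filter (·.Nonempty)) :
      volume.real (⋂ j ∈ u, exceedSet n s d {j}) = max (s - #u * d) 0 ^ n / n.factorial := by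
    rw [biInter_exceedSet_singleton s d (mem_filter.1 hu).2, measureReal_def,
      volume_exceedSet hn s hd.le, ENNReal.toReal_ofReal (by positivity)]
  rw [sum_congr rfl fun u hu => congrArg _ (hterm u hu),
    sum_powerset_filter_nonempty_apply_card
      (fun k => (-1 : ℝ) ^ (k + 1) * (max (s - k * d) 0 ^ n / n.factorial)),
    card_univ, Fintype.card_fin]
  refine sum_congr rfl fun k hk => ?_
  obtain ⟨m, rfl⟩ := Nat.exists_eq_add_of_le' (mem_Icc.1 hk).1
  simp only [nsmul_eq_mul, Nat.add_sub_cancel, pow_succ]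
  ring

/-- The Lebesgue measure of the disconnected region
`U = {y ∈ S_n : some slack exceeds d}` inside the full-dimensional slack simplex
`S_n = {y ∈ ℝ^n : y ≥ 0, ∑ y_i ≤ s}` (the `(n+1)`-st slack being `s - ∑ y_i`) is given by
the inclusion–exclusion formula `∑_{k=1}^{n+1} (-1)^{k-1} C(n+1,k) max(s - k d, 0)^n / n!`. -/
theorem stmt2 (n : ℕ) (hn : 0 < n) (s d : ℝ) (hs : 0 < s) (hd : 0 < d) :
    (volume {y : Fin n → ℝ |
        ((∀ i, 0 ≤ y i) ∧ ∑ i, y i ≤ s) ∧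
          ((∃ i, d < y i) ∨ d < s - ∑ i, y i)}).toReal
      = ∑ k ∈ Finset.Icc 1 (n + 1),
          (-1 : ℝ) ^ (k - 1) * (n + 1).choose k * (max (s - k * d) 0) ^ n / n.factorial :=
  stmt2_general n hn s d hd
end

section
/- Let n be a positive integer, let a_1, …, a_n > 0 and b > 0 be reals, and let T = {x ∈ ℝ^n : a_1 x_1 + ⋯ + a_n x_n ≤ b} be a half-space and C = [0,1]^n the unit hypercube. Then the n-dimensional Lebesgue measure of T ∩ C equals (1 / (n! · a_1 ⋯ a_n)) · Σ_{v ∈ {0,1}^n} (−1)^{v_1 + ⋯ + v_n} · (max(b − (a_1 v_1 + ⋯ + a_n v_n), 0))^n. -/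
/-!
Coordinatewise `1_{[0,1)} = 1_{[0,∞)} - 1_{[1,∞)}`, so expanding the product over the coordinates
writes the indicator of the half-open cube as the alternating sum, over the vertices `v`, of the
indicators of the orthants `x ≥ v`. Each orthant meets the half-space `a ⬝ x ≤ b` in a translate of
the simplex `{y ≥ 0, a ⬝ y ≤ b - a ⬝ v}`, which is empty when `b < a ⬝ v` and otherwise has volume
`(b - a ⬝ v)^n / (n! ∏ aᵢ)` (slice along the first coordinate and induct on `n`). Integrating gives
the formula for the half-open cube, which differs from the closed one by a null set.
-/

open MeasureTheory Finset

theorem Set.indicator_Ico_eq_sum_bool {α : Type*} [LinearOrder α] {l u : α} (hlu : l ≤ u)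
    (t : α) :
    (Set.Ico l u).indicator (1 : α → ℝ) t
      = ∑ b : Bool, (if b then -1 else 1) * (Set.Ici (if b then u else l)).indicator 1 t := by
  rw [← Set.Ici_sdiff_Ici, Set.indicator_sdiff (Set.Ici_subset_Ici.2 hlu), Fintype.sum_bool]
  simp only [if_true, Bool.false_eq_true, if_false, Pi.sub_apply]
  ring

theorem Set.indicator_univ_pi_Ico_eq_sum {ι α : Type*} [Fintype ι] [DecidableEq ι] [LinearOrder α]
    {l u : ι → α} (hlu : l ≤ u) (x : ι → α) :
    (Set.univ.pi fun i => Set.Ico (l i) (u i)).indicator (1 : (ι → α) → ℝ) x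
      = ∑ v : ι → Bool, (-1 : ℝ) ^ #{i | v i} *
          (Set.Ici fun i => if v i then u i else l i).indicator 1 x := by
  rw [← coe_univ, Set.indicator_pi_one_apply]
  simp_rw [Set.indicator_Ico_eq_sum_bool (hlu _), Fintype.prod_sum, prod_mul_distrib]
  refine sum_congr rfl fun v _ => ?_
  rw [prod_ite, prod_const, prod_const_one, mul_one, ← Set.pi_univ_Ici, ← coe_univ,
    Set.indicator_pi_one_apply]

theorem measureReal_univ_pi_Ico_inter_eq_sum {ι : Type*} [Fintype ι] [DecidableEq ι]
    {μ : Measure (ι → ℝ)} {l u : ι → ℝ} (hlu : l ≤ u) {H : Set (ι → ℝ)} (hH : MeasurableSet H)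
    (hfin : ∀ v : ι → Bool, μ (Set.Ici (fun i => if v i then u i else l i) ∩ H) ≠ ⊤) :
    μ.real ((Set.univ.pi fun i => Set.Ico (l i) (u i)) ∩ H)
      = ∑ v : ι → Bool, (-1 : ℝ) ^ #{i | v i} *
          μ.real (Set.Ici (fun i => if v i then u i else l i) ∩ H) := by
  have hmeas (v : ι → Bool) :
      MeasurableSet (Set.Ici (fun i => if v i then u i else l i) ∩ H) :=
    measurableSet_Ici.inter hH
  rw [← integral_indicator_one ((MeasurableSet.univ_pi fun _ => measurableSet_Ico).inter hH)]
  simp_rw [← integral_indicator_one (hmeas _), ← integral_const_mul]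
  rw [← integral_finsetSum _ fun v _ =>
    ((integrable_indicator_iff (hmeas v)).2 (integrableOn_const (hfin v))).const_mul _]
  congr with x
  simp_rw [Set.inter_indicator_one, Pi.mul_apply, Set.indicator_univ_pi_Ico_eq_sum hlu, sum_mul,
    mul_assoc]

section
variable {ι : Type*} [Fintype ι]

def cornerSimplex (a w : ι → ℝ) (c : ℝ) : Set (ι → ℝ) :=
  Set.Ici w ∩ {x | ∑ i, a i * x i ≤ c}

theorem measurableSet_cornerSimplex (a w : ι → ℝ) (c : ℝ) :
    MeasurableSet (cornerSimplex a w c) :=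
  measurableSet_Ici.inter (measurableSet_le (by fun_prop) measurable_const)

theorem cornerSimplex_eq_empty {a w : ι → ℝ} {c : ℝ} (ha : ∀ i, 0 ≤ a i)
    (hc : c < ∑ i, a i * w i) : cornerSimplex a w c = ∅ := by
  refine Set.eq_empty_of_forall_notMem fun x ⟨hwx, hx⟩ => hc.not_ge (hx.trans' ?_)
  exact sum_le_sum fun i _ => mul_le_mul_of_nonneg_left (hwx i) (ha i)

theorem volume_cornerSimplex_eq_volume_cornerSimplex_zero (a w : ι → ℝ) (c : ℝ) :
    volume (cornerSimplex a w c) = volume (cornerSimplex a 0 (c - ∑ i, a i * w i)) := by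
  have : (· + w) ⁻¹' cornerSimplex a w c = cornerSimplex a 0 (c - ∑ i, a i * w i) := by
    ext y
    simp [cornerSimplex, mul_add, sum_add_distrib, le_sub_iff_add_le, Pi.le_def]
  rw [← this, measure_preimage_add_right]

end

theorem volume_eq_lintegral_volume_preimage_cons {α : Type*} [MeasureSpace α]
    [SigmaFinite (volume : Measure α)] {n : ℕ} {s : Set (Fin (n + 1) → α)}
    (hs : MeasurableSet s) :
    volume s = ∫⁻ t, volume (Fin.cons (α := fun _ => α) t ⁻¹' s) := by
  have e := (volume_preserving_piFinSuccAbove (fun _ : Fin (n + 1) => α) 0).symm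
  rw [← e.measure_preimage hs.nullMeasurableSet, Measure.volume_eq_prod,
    Measure.prod_apply (hs.preimage e.measurable)]
  simp only [MeasurableEquiv.piFinSuccAbove_symm_apply, Fin.insertNthEquiv_zero]
  rfl

theorem integral_sub_mul_pow {a : ℝ} (ha : a ≠ 0) (c : ℝ) (n : ℕ) :
    ∫ t in (0 : ℝ)..c / a, (c - a * t) ^ n = c ^ (n + 1) / ((n + 1) * a) := by
  rw [intervalIntegral.integral_comp_sub_mul (fun x => x ^ n) ha, integral_pow, smul_eq_mul]
  simp only [mul_div_cancel₀ _ ha, sub_self, mul_zero, sub_zero, ne_eq, Nat.add_one_ne_zero,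
    not_false_eq_true, zero_pow]
  field_simp

theorem cons_mem_cornerSimplex_zero_iff {n : ℕ} {a : Fin (n + 1) → ℝ} {c t : ℝ}
    {y : Fin n → ℝ} :
    Fin.cons (α := fun _ => ℝ) t y ∈ cornerSimplex a 0 c
      ↔ 0 ≤ t ∧ y ∈ cornerSimplex (Fin.tail a) 0 (c - a 0 * t) := by
  simp [cornerSimplex, Fin.sum_univ_succ, Fin.forall_fin_succ, Pi.le_def, le_sub_iff_add_le',
    Fin.tail, and_assoc]

theorem volume_preimage_cons_cornerSimplex_zero {n : ℕ} {a : Fin (n + 1) → ℝ}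
    (ha : ∀ i, 0 < a i) (c t : ℝ) :
    volume (Fin.cons (α := fun _ => ℝ) t ⁻¹' cornerSimplex a 0 c)
      = (Set.Icc 0 (c / a 0)).indicator
          (fun t => volume (cornerSimplex (Fin.tail a) 0 (c - a 0 * t))) t := by
  have hpre : Fin.cons (α := fun _ => ℝ) t ⁻¹' cornerSimplex a 0 c
      = {y | 0 ≤ t ∧ y ∈ cornerSimplex (Fin.tail a) 0 (c - a 0 * t)} :=
    Set.ext fun _ => cons_mem_cornerSimplex_zero_iff
  by_cases ht : t ∈ Set.Icc 0 (c / a 0)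
  · simp [hpre, ht.1, Set.indicator_of_mem ht]
  · rw [Set.indicator_of_notMem ht, hpre]
    rcases lt_or_ge t 0 with ht0 | ht0
    · simp only [ht0.not_ge, false_and, Set.ofPred_false, measure_empty]
    · have hneg : c - a 0 * t < ∑ i, Fin.tail a i * (0 : Fin n → ℝ) i := by
        have := (le_div_iff₀' (ha 0)).not.1 fun h => ht ⟨ht0, h⟩
        simp only [Pi.zero_apply, mul_zero, sum_const_zero]
        linarith
      simp [cornerSimplex_eq_empty (a := Fin.tail a) (fun i => (ha i.succ).le) hneg]

theorem volume_cornerSimplex_zero {n : ℕ} {a : Fin n → ℝ} (ha : ∀ i, 0 < a i) {c : ℝ}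
    (hc : 0 ≤ c) :
    volume (cornerSimplex a 0 c) = ENNReal.ofReal (c ^ n / (n.factorial * ∏ i, a i)) := by
  induction n generalizing c with
  | zero =>
    have : cornerSimplex a 0 c = Set.univ :=
      Set.eq_univ_of_forall fun x => ⟨fun i => i.elim0, by simpa using hc⟩
    rw [this, volume_pi, Measure.pi_univ]
    simp
  | succ n ih =>
    have ha0 : 0 < a 0 := ha 0
    have hprod : 0 < ∏ i, Fin.tail a i := prod_pos fun i _ => ha i.succ
    have hct {t : ℝ} (ht : t ∈ Set.Icc 0 (c / a 0)) : 0 ≤ c - a 0 * t :=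
      sub_nonneg.2 ((le_div_iff₀' ha0).1 ht.2)
    rw [volume_eq_lintegral_volume_preimage_cons (measurableSet_cornerSimplex _ _ _)]
    simp_rw [volume_preimage_cons_cornerSimplex_zero ha c]
    rw [lintegral_indicator measurableSet_Icc, setLIntegral_congr_fun measurableSet_Icc
        fun t ht => ih (a := Fin.tail a) (fun i => ha i.succ) (hct ht),
      ← ofReal_integral_eq_lintegral_ofReal (Continuous.integrableOn_Icc (by fun_prop))
        (ae_restrict_of_forall_mem measurableSet_Icc fun t ht => by have := hct ht; positivity),
      integral_Icc_eq_integral_Ioc, ← intervalIntegral.integral_of_le (by positivity),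
      intervalIntegral.integral_div, integral_sub_mul_pow ha0.ne']
    congr 1
    rw [Fin.prod_univ_succ, Nat.factorial_succ]
    simp only [Fin.tail]
    push_cast
    field_simp

theorem volume_cornerSimplex {n : ℕ} (hn : 0 < n) {a : Fin n → ℝ} (ha : ∀ i, 0 < a i)
    (w : Fin n → ℝ) (c : ℝ) :
    volume (cornerSimplex a w c)
      = ENNReal.ofReal (max (c - ∑ i, a i * w i) 0 ^ n / (n.factorial * ∏ i, a i)) := by
  rw [volume_cornerSimplex_eq_volume_cornerSimplex_zero]
  rcases le_or_gt 0 (c - ∑ i, a i * w i) with h | h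
  · rw [volume_cornerSimplex_zero ha h, max_eq_left h]
  · rw [cornerSimplex_eq_empty (fun i => (ha i).le) (by simpa using h), measure_empty,
      max_eq_right h.le, zero_pow hn.ne', zero_div, ENNReal.ofReal_zero]

theorem stmt10_general (n : ℕ) (hn : 0 < n) (a : Fin n → ℝ) (b : ℝ)
    (ha : ∀ i, 0 < a i) :
    (volume {x : Fin n → ℝ | (∀ i, x i ∈ Set.Icc (0:ℝ) 1) ∧ ∑ i, a i * x i ≤ b}).toReal
      = (1 / (n.factorial * ∏ i, a i)) *
          ∑ v : Fin n → Bool,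
            (-1 : ℝ) ^ (Finset.univ.filter fun i => v i).card *
              (max (b - ∑ i, a i * (if v i then 1 else 0)) 0) ^ n := by
  set H := {x : Fin n → ℝ | ∑ i, a i * x i ≤ b}
  have hbox : {x : Fin n → ℝ | (∀ i, x i ∈ Set.Icc (0:ℝ) 1) ∧ ∑ i, a i * x i ≤ b}
      =ᵐ[volume] ((Set.univ.pi fun _ => Set.Ico (0 : ℝ) 1) ∩ H : Set (Fin n → ℝ)) := by
    have : {x : Fin n → ℝ | (∀ i, x i ∈ Set.Icc (0:ℝ) 1) ∧ ∑ i, a i * x i ≤ b}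
        = (Set.univ.pi fun _ => Set.Icc (0 : ℝ) 1) ∩ H := by
      ext x
      simp only [H, Set.mem_inter_iff, Set.mem_univ_pi, Set.mem_ofPred_eq]
    rw [this]
    exact Measure.pi_Ico_ae_eq_pi_Icc.symm.inter (ae_eq_refl H)
  have hvol (v : Fin n → Bool) :
      volume (Set.Ici (fun i => if v i then 1 else 0) ∩ H)
        = ENNReal.ofReal (max (b - ∑ i, a i * (if v i then 1 else 0)) 0 ^ n
            / (n.factorial * ∏ i, a i)) :=
    volume_cornerSimplex hn ha _ b
  rw [measure_congr hbox, ← measureReal_def,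
    measureReal_univ_pi_Ico_inter_eq_sum (H := H) (fun _ => zero_le_one)
      (measurableSet_le (by fun_prop) measurable_const)
      fun v => (hvol v).trans_ne ENNReal.ofReal_ne_top, mul_sum]
  refine sum_congr rfl fun v _ => ?_
  have hprod : 0 < ∏ i, a i := prod_pos fun i _ => ha i
  rw [measureReal_def, hvol, ENNReal.toReal_ofReal (by positivity)]
  ring

/-- The volume of the intersection of the half-space `{x : ∑ aᵢ xᵢ ≤ b}` (with positive
coefficients) with the unit hypercube `[0,1]^n` is given by the inclusion–exclusion formula
`(1/(n! ∏ aᵢ)) ∑_{v ∈ {0,1}^n} (-1)^{∑ vᵢ} max(b - aᵀv, 0)^n`. -/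
theorem stmt10 (n : ℕ) (hn : 0 < n) (a : Fin n → ℝ) (b : ℝ)
    (ha : ∀ i, 0 < a i) (hb : 0 < b) :
    (volume {x : Fin n → ℝ | (∀ i, x i ∈ Set.Icc (0:ℝ) 1) ∧ ∑ i, a i * x i ≤ b}).toReal
      = (1 / (n.factorial * ∏ i, a i)) *
          ∑ v : Fin n → Bool,
            (-1 : ℝ) ^ (Finset.univ.filter fun i => v i).card *
              (max (b - ∑ i, a i * (if v i then 1 else 0)) 0) ^ n :=
  stmt10_general n hn a b ha
end
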